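/- arXiv:2312.00267 — 7 statements merged into one kernel-verified Lean document; each statement's English description precedes it below -/
import Mathlib

section
/- Let X be a set of contexts and A a nonempty finite set of actions. Let r : X × A → ℝ be a reward function and ρ : ℝ → ℝ a strictly monotonically increasing link function, and define the contextual Borda function f_r(x, a) = (1/|A|) ∑_{a' ∈ A} ρ(r(x, a) − r(x, a')). Then for every x ∈ X and a₁, a₂ ∈ A, r(x, a₁) < r(x, a₂) if and only if f_r(x, a₁) < f_r(x, a₂); consequently, for every x ∈ X, the set of maximizers over A of a ↦ r(x, a) equals the set of maximizers over A of a ↦ f_r(x, a). -/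
/-- For the contextual Borda function `f x a = (1/|A|) ∑ a', ρ (r x a - r x a')`
with a strictly increasing link function `ρ`, reward comparisons and Borda comparisons agree,
and hence the maximizer sets coincide at every context. -/
theorem borda_preserves_order_and_maximizers
    {X A : Type*} [Fintype A] [Nonempty A]
    (r : X → A → ℝ) (ρ : ℝ → ℝ) (hρ : StrictMono ρ)
    (f : X → A → ℝ)
    (hf : ∀ x a, f x a = (1 / (Fintype.card A : ℝ)) * ∑ a' : A, ρ (r x a - r x a')) :
    (∀ x a₁ a₂, r x a₁ < r x a₂ ↔ f x a₁ < f x a₂) ∧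
    (∀ x, {a : A | ∀ a' : A, r x a' ≤ r x a} = {a : A | ∀ a' : A, f x a' ≤ f x a}) := by
  have hcard : (0 : ℝ) < 1 / (Fintype.card A : ℝ) := by
    have : (0 : ℝ) < (Fintype.card A : ℝ) := by
      exact_mod_cast Fintype.card_pos
    positivity
  have key : ∀ x a₁ a₂, r x a₁ < r x a₂ ↔ f x a₁ < f x a₂ := by
    intro x a₁ a₂
    constructor
    · intro h
      rw [hf, hf]
      apply mul_lt_mul_of_pos_left _ hcard
      apply Finset.sum_lt_sum_of_nonempty Finset.univ_nonempty
      intro a' _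
      exact hρ (by linarith)
    · intro h
      by_contra hle
      push_neg at hle
      have : f x a₂ ≤ f x a₁ := by
        rw [hf, hf]
        apply mul_le_mul_of_nonneg_left _ hcard.le
        apply Finset.sum_le_sum
        intro a' _
        exact hρ.monotone (by linarith)
      linarith
  refine ⟨key, fun x => ?_⟩
  ext a
  simp only [Set.mem_setOf_eq]
  constructor
  · intro h a'
    by_contra hlt
    push_neg at hlt
    exact absurd ((key x a a').mpr hlt) (not_lt.mpr (h a'))
  · intro h a'
    by_contra hlt
    push_neg at hlt
    exact absurd ((key x a a').mp hlt) (not_lt.mpr (h a'))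
end

section
/- Let X be a set of contexts, A a nonempty finite set of actions, r : X × A → ℝ a reward function, and L₁ > 0. Suppose the link function ρ : ℝ → ℝ satisfies ρ(u) − ρ(v) ≥ (1/L₁)(u − v) for all real numbers v ≤ u. Then the contextual Borda function f_r(x, a) = (1/|A|) ∑_{a' ∈ A} ρ(r(x, a) − r(x, a')) satisfies, for every x ∈ X and a ∈ A, (1/L₁)(r*(x) − r(x, a)) ≤ f_r*(x) − f_r(x, a), where r*(x) = max_{a'' ∈ A} r(x, a'') and f_r*(x) = max_{a'' ∈ A} f_r(x, a''). -/
/-- If the link function `ρ` satisfies `ρ u - ρ v ≥ (1/L₁) (u - v)` for `v ≤ u`,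
then the contextual Borda function satisfies Assumption 2:
`(1/L₁) (r*(x) - r(x,a)) ≤ f_r*(x) - f_r(x,a)`. -/
theorem borda_assumption_two_of_link_lower_lipschitz
    {X A : Type*} [Fintype A] [Nonempty A]
    (r : X → A → ℝ) (L₁ : ℝ) (hL : 0 < L₁) (ρ : ℝ → ℝ)
    (hρ : ∀ v u : ℝ, v ≤ u → ρ u - ρ v ≥ (1 / L₁) * (u - v))
    (f : X → A → ℝ)
    (hf : ∀ x a, f x a = (1 / (Fintype.card A : ℝ)) * ∑ a' : A, ρ (r x a - r x a')) :
    ∀ x a, (1 / L₁) * (Finset.univ.sup' Finset.univ_nonempty (r x) - r x a)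
      ≤ Finset.univ.sup' Finset.univ_nonempty (f x) - f x a := by
  intro x a
  obtain ⟨b, -, hb⟩ := Finset.exists_mem_eq_sup' Finset.univ_nonempty (r x)
  have hba : r x a ≤ r x b := by rw [← hb]; exact Finset.le_sup' _ (Finset.mem_univ a)
  have hfb : f x b ≤ Finset.univ.sup' Finset.univ_nonempty (f x) :=
    Finset.le_sup' _ (Finset.mem_univ b)
  have hcard : (0 : ℝ) < (Fintype.card A : ℝ) := by
    exact_mod_cast Fintype.card_pos
  have key : (1 / L₁) * (r x b - r x a) ≤ f x b - f x a := by
    rw [hf, hf, ← mul_sub, ← Finset.sum_sub_distrib]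
    have hsum : (Fintype.card A : ℝ) * ((1 / L₁) * (r x b - r x a))
        ≤ ∑ a' : A, (ρ (r x b - r x a') - ρ (r x a - r x a')) := by
      calc (Fintype.card A : ℝ) * ((1 / L₁) * (r x b - r x a))
          = ∑ _a' : A, (1 / L₁) * (r x b - r x a) := by
            rw [Finset.sum_const, Finset.card_univ, nsmul_eq_mul]
        _ ≤ _ := by
            refine Finset.sum_le_sum fun a' _ => ?_
            have := hρ (r x a - r x a') (r x b - r x a') (by linarith)
            linarith
    rw [mul_comm, ← le_div_iff₀ hcard] at hsum
    rw [one_div_mul_eq_div (Fintype.card A : ℝ)]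
    exact hsum
  calc (1 / L₁) * (Finset.univ.sup' Finset.univ_nonempty (r x) - r x a)
      = (1 / L₁) * (r x b - r x a) := by rw [hb]
    _ ≤ f x b - f x a := key
    _ ≤ _ := by linarith
end

section
/- Let X be a set of contexts, A a nonempty finite set of actions, and r : X × A → ℝ a reward function with |r(x, a)| ≤ B for all x ∈ X, a ∈ A. Let ρ = σ be the logistic link function σ(u) = 1/(1 + e^{−u}), and define the contextual Borda function f_r(x, a) = (1/|A|) ∑_{a' ∈ A} σ(r(x, a) − r(x, a')). Then for every x ∈ X and a ∈ A, (e^{2B}/(1 + e^{2B})²)·(r*(x) − r(x, a)) ≤ f_r*(x) − f_r(x, a); that is, Assumption 2 of the paper holds for the logistic (Bradley–Terry–Luce) link function with constant L₁ = (1 + e^{2B})²/e^{2B}. -/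
open Real

lemma sqprime_ge (B t : ℝ) (ht : |t| ≤ 2*B) :
    Real.exp (2*B) / (1 + Real.exp (2*B))^2 ≤ Real.exp t / (1 + Real.exp t)^2 := by
  have h1 : Real.exp t ≤ Real.exp (2*B) := Real.exp_le_exp.2 (le_of_abs_le ht)
  have h2 : Real.exp (-(2*B)) ≤ Real.exp t := Real.exp_le_exp.2 (neg_le_of_abs_le ht)
  have h3 : Real.exp (-(2*B)) * Real.exp (2*B) = 1 := by
    rw [← Real.exp_add]; simp
  have hs := Real.exp_pos t
  have hS := Real.exp_pos (2*B)
  rw [div_le_div_iff₀ (by positivity) (by positivity)]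
  nlinarith [mul_nonneg (sub_nonneg.2 h1) (sub_nonneg.2 (by nlinarith : (1:ℝ) ≤ Real.exp t * Real.exp (2*B)))]

lemma key (B u v : ℝ) (hu : |u| ≤ 2*B) (hv : |v| ≤ 2*B) (hvu : v ≤ u) :
    (Real.exp (2*B) / (1 + Real.exp (2*B))^2) * (u - v)
      ≤ 1/(1+Real.exp (-u)) - 1/(1+Real.exp (-v)) := by
  set c := Real.exp (2*B) / (1 + Real.exp (2*B))^2 with hc
  have hcpos : 0 < c := by positivity
  -- g t := exp(t/2)/(1+exp t), g t ^ 2 = exp t/(1+exp t)^2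
  set gu := Real.exp (u/2) / (1 + Real.exp u) with hgu
  set gv := Real.exp (v/2) / (1 + Real.exp v) with hgv
  have hgusq : gu^2 = Real.exp u / (1 + Real.exp u)^2 := by
    rw [hgu, div_pow, sq, ← Real.exp_add]; ring_nf
  have hgvsq : gv^2 = Real.exp v / (1 + Real.exp v)^2 := by
    rw [hgv, div_pow, sq, ← Real.exp_add]; ring_nf
  have hgu2 : c ≤ gu^2 := by rw [hgusq]; exact sqprime_ge B u hu
  have hgv2 : c ≤ gv^2 := by rw [hgvsq]; exact sqprime_ge B v hv
  have hgunn : 0 ≤ gu := by positivity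
  have hgvnn : 0 ≤ gv := by positivity
  have hprod : c ≤ gu * gv := by
    have h : c^2 ≤ (gu*gv)^2 := by nlinarith
    have := Real.sqrt_le_sqrt h
    rwa [Real.sqrt_sq hcpos.le, Real.sqrt_sq (by positivity)] at this
  -- exp u - exp v ≥ exp((u+v)/2) * (u - v)
  have hexpdiff : Real.exp ((u+v)/2) * (u - v) ≤ Real.exp u - Real.exp v := by
    have h1 : (u-v)/2 ≤ Real.sinh ((u-v)/2) := Real.self_le_sinh_iff.2 (by linarith)
    rw [Real.sinh_eq] at h1
    have e1 : Real.exp u = Real.exp ((u+v)/2) * Real.exp ((u-v)/2) := by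
      rw [← Real.exp_add]; ring_nf
    have e2 : Real.exp v = Real.exp ((u+v)/2) * Real.exp (-((u-v)/2)) := by
      rw [← Real.exp_add]; ring_nf
    have hp := Real.exp_pos ((u+v)/2)
    nlinarith
  -- rewrite σ via exp t/(1+exp t)
  have hsig : ∀ t : ℝ, 1/(1+Real.exp (-t)) = Real.exp t / (1 + Real.exp t) := by
    intro t
    have h := Real.exp_pos t
    rw [Real.exp_neg]
    field_simp
    ring
  rw [hsig, hsig]
  have hpu := Real.exp_pos u
  have hpv := Real.exp_pos v
  have hdiff : Real.exp u / (1 + Real.exp u) - Real.exp v / (1 + Real.exp v)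
      = (Real.exp u - Real.exp v) / ((1 + Real.exp u) * (1 + Real.exp v)) := by
    field_simp; ring
  rw [hdiff]
  rw [le_div_iff₀ (by positivity)]
  have hmid : Real.exp ((u+v)/2) = gu * gv * ((1+Real.exp u)*(1+Real.exp v)) := by
    rw [hgu, hgv]
    field_simp
    rw [← Real.exp_add]
    ring_nf
  calc c * (u - v) * ((1 + Real.exp u) * (1 + Real.exp v))
      ≤ gu * gv * (u - v) * ((1 + Real.exp u) * (1 + Real.exp v)) := by
        apply mul_le_mul_of_nonneg_right _ (by positivity)
        exact mul_le_mul_of_nonneg_right hprod (by linarith)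
    _ = Real.exp ((u+v)/2) * (u - v) := by rw [hmid]; ring
    _ ≤ Real.exp u - Real.exp v := hexpdiff

/-- For a reward bounded by `B` and the logistic (Bradley–Terry–Luce) link,
the contextual Borda function satisfies Assumption 2 with
`L₁ = (1 + e^{2B})² / e^{2B}`, i.e.
`(e^{2B}/(1 + e^{2B})²) (r*(x) - r(x,a)) ≤ f_r*(x) - f_r(x,a)`. -/
theorem borda_assumption_two_logistic
    {X A : Type*} [Fintype A] [Nonempty A]
    (r : X → A → ℝ) (B : ℝ) (hB : ∀ x a, |r x a| ≤ B)
    (f : X → A → ℝ)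
    (hf : ∀ x a, f x a = (1 / (Fintype.card A : ℝ)) *
      ∑ a' : A, 1 / (1 + Real.exp (-(r x a - r x a')))) :
    ∀ x a, (Real.exp (2 * B) / (1 + Real.exp (2 * B)) ^ 2) *
        (Finset.univ.sup' Finset.univ_nonempty (r x) - r x a)
      ≤ Finset.univ.sup' Finset.univ_nonempty (f x) - f x a := by
  intro x a
  set c := Real.exp (2 * B) / (1 + Real.exp (2 * B)) ^ 2 with hc
  obtain ⟨b, -, hb⟩ := Finset.exists_mem_eq_sup' (Finset.univ_nonempty (α := A)) (r x)
  have hba : r x a ≤ r x b := by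
    rw [← hb]; exact Finset.le_sup' (r x) (Finset.mem_univ a)
  have hfb : f x b ≤ Finset.univ.sup' Finset.univ_nonempty (f x) :=
    Finset.le_sup' (f x) (Finset.mem_univ b)
  have hN : (0 : ℝ) < (Fintype.card A : ℝ) := by exact_mod_cast Fintype.card_pos
  have habs : ∀ a₁ a₂ : A, |r x a₁ - r x a₂| ≤ 2 * B := by
    intro a₁ a₂
    have := hB x a₁; have := hB x a₂
    calc |r x a₁ - r x a₂| ≤ |r x a₁| + |r x a₂| := abs_sub _ _
      _ ≤ 2 * B := by linarith
  have hterm : ∀ a' : A, c * (r x b - r x a)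
      ≤ 1 / (1 + Real.exp (-(r x b - r x a'))) - 1 / (1 + Real.exp (-(r x a - r x a'))) :=
    fun a' => by
      have h := key B _ _ (habs b a') (habs a a') (by linarith : r x a - r x a' ≤ r x b - r x a')
      calc c * (r x b - r x a) = c * (r x b - r x a' - (r x a - r x a')) := by ring
        _ ≤ _ := h
  have hsum : (Fintype.card A : ℝ) * (c * (r x b - r x a))
      ≤ ∑ a' : A, (1 / (1 + Real.exp (-(r x b - r x a'))) -
          1 / (1 + Real.exp (-(r x a - r x a')))) := by
    calc (Fintype.card A : ℝ) * (c * (r x b - r x a))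
        = ∑ _a' : A, c * (r x b - r x a) := by
          rw [Finset.sum_const, Finset.card_univ, nsmul_eq_mul]
      _ ≤ _ := Finset.sum_le_sum fun a' _ => hterm a'
  have hfd : f x b - f x a = (1 / (Fintype.card A : ℝ)) *
      ∑ a' : A, (1 / (1 + Real.exp (-(r x b - r x a'))) -
          1 / (1 + Real.exp (-(r x a - r x a')))) := by
    rw [hf, hf, ← mul_sub, ← Finset.sum_sub_distrib]
  have : c * (r x b - r x a) ≤ f x b - f x a := by
    rw [hfd]
    have heq : c * (r x b - r x a) = (1 / (Fintype.card A : ℝ)) *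
        ((Fintype.card A : ℝ) * (c * (r x b - r x a))) := by
      field_simp
    rw [heq]
    exact mul_le_mul_of_nonneg_left hsum (by positivity)
  rw [hb]
  linarith
end

section
/- Let X be a set of contexts, A a nonempty finite set of actions, and r : X × A → ℝ a reward function with |r(x, a)| ≤ B for all x ∈ X, a ∈ A. Let ρ = Φ be the standard normal cumulative distribution function, and define the contextual Borda function f_r(x, a) = (1/|A|) ∑_{a' ∈ A} Φ(r(x, a) − r(x, a')). Then for every x ∈ X and a ∈ A, ((1/√(2π)) e^{−2B²})·(r*(x) − r(x, a)) ≤ f_r*(x) − f_r(x, a); that is, Assumption 2 of the paper holds for the Gaussian CDF (Thurstone) link function with constant L₁ = √(2π) e^{2B²}. -/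
/-!
Along the segment from `r(x, a)` to a maximiser `a₀`, every comparison `a'` moves the argument of
`Φ` by exactly `r(x, a₀) - r(x, a)`, and this happens inside `[-2B, 2B]`, where the Gaussian density
is at least `e^{-2B²}/√(2π)`. So each summand of the Borda score grows by at least that much times
`r(x, a₀) - r(x, a)`, and hence so does their average.
-/

open MeasureTheory Finset

noncomputable def bordaScore {A : Type*} [Fintype A] (ρ : ℝ → ℝ) (g : A → ℝ) (a : A) : ℝ :=
  (1 / (Fintype.card A : ℝ)) * ∑ a' : A, ρ (g a - g a')

section Borda

variable {A : Type*} [Fintype A] (ρ : ℝ → ℝ) (g : A → ℝ)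

lemma mul_sub_le_bordaScore_sub [Nonempty A] {c : ℝ} {a₀ a : A}
    (h : ∀ b, c * (g a₀ - g a) ≤ ρ (g a₀ - g b) - ρ (g a - g b)) :
    c * (g a₀ - g a) ≤ bordaScore ρ g a₀ - bordaScore ρ g a := by
  have hcard : (0 : ℝ) < Fintype.card A := mod_cast Fintype.card_pos
  have hsum : (Fintype.card A : ℝ) * (c * (g a₀ - g a))
      ≤ ∑ b : A, (ρ (g a₀ - g b) - ρ (g a - g b)) := by
    simpa using card_nsmul_le_sum univ _ _ fun b _ => h b
  rw [bordaScore, bordaScore, ← mul_sub, ← sum_sub_distrib, one_div, inv_mul_eq_div,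
    le_div_iff₀ hcard]
  linarith

/-- A link whose slopes on `[-2B, 2B]` are at least `c` makes the Borda score of rewards bounded
by `B` satisfy Assumption 2 with `L₁ = 1 / c`. -/
theorem mul_sup'_sub_le_bordaScore_sup'_sub [Nonempty A] {B c : ℝ}
    (hρ : ∀ u v, |u| ≤ 2 * B → |v| ≤ 2 * B → v ≤ u → c * (u - v) ≤ ρ u - ρ v)
    (hg : ∀ a, |g a| ≤ B) (a : A) :
    c * (univ.sup' univ_nonempty g - g a)
      ≤ univ.sup' univ_nonempty (bordaScore ρ g) - bordaScore ρ g a := by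
  obtain ⟨a₀, -, ha₀⟩ := exists_mem_eq_sup' univ_nonempty g
  have hle : g a ≤ g a₀ := ha₀ ▸ le_sup' g (mem_univ a)
  have hgap : c * (g a₀ - g a) ≤ bordaScore ρ g a₀ - bordaScore ρ g a := by
    refine mul_sub_le_bordaScore_sub ρ g fun b => ?_
    have h₀ := abs_le.mp (hg a₀)
    have h₁ := abs_le.mp (hg a)
    have h₂ := abs_le.mp (hg b)
    convert hρ (g a₀ - g b) (g a - g b) (abs_le.mpr ⟨by linarith, by linarith⟩)
      (abs_le.mpr ⟨by linarith, by linarith⟩) (by linarith) using 2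
    ring
  rw [ha₀]
  linarith [le_sup' (bordaScore ρ g) (mem_univ a₀)]

end Borda

lemma mul_sub_le_integral_Iic_sub_integral_Iic {φ : ℝ → ℝ} (hφ : Integrable φ) {c u v : ℝ}
    (hvu : v ≤ u) (hc : ∀ s ∈ Set.Ioc v u, c ≤ φ s) :
    c * (u - v) ≤ (∫ s in Set.Iic u, φ s) - ∫ s in Set.Iic v, φ s := by
  rw [intervalIntegral.integral_Iic_sub_Iic hφ.integrableOn hφ.integrableOn,
    intervalIntegral.integral_of_le hvu]
  calc c * (u - v) = ∫ _ in Set.Ioc v u, c := by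
        rw [setIntegral_const, Real.volume_real_Ioc_of_le hvu, smul_eq_mul, mul_comm]
    _ ≤ ∫ s in Set.Ioc v u, φ s :=
        setIntegral_mono_on (integrableOn_const (by simp [Real.volume_Ioc]))
          hφ.integrableOn measurableSet_Ioc hc

lemma integrable_stdGaussian_density :
    Integrable fun s : ℝ => (1 / Real.sqrt (2 * Real.pi)) * Real.exp (-s ^ 2 / 2) := by
  convert (integrable_exp_neg_mul_sq (b := 1 / 2) (by norm_num)).const_mul
    (1 / Real.sqrt (2 * Real.pi)) using 4
  ring

lemma stdGaussian_density_ge_of_abs_le {M s : ℝ} (hs : |s| ≤ M) :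
    (1 / Real.sqrt (2 * Real.pi)) * Real.exp (-(M ^ 2 / 2))
      ≤ (1 / Real.sqrt (2 * Real.pi)) * Real.exp (-s ^ 2 / 2) := by
  have hsq : s ^ 2 ≤ M ^ 2 := sq_le_sq' (abs_le.mp hs).1 (abs_le.mp hs).2
  gcongr
  linarith

/-- For a reward bounded by `B` and the Gaussian-CDF (Thurstone) link,
the contextual Borda function satisfies Assumption 2 with `L₁ = √(2π) e^{2B²}`, i.e.
`((1/√(2π)) e^{-2B²}) (r*(x) - r(x,a)) ≤ f_r*(x) - f_r(x,a)`. -/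
theorem borda_assumption_two_gaussian_cdf
    {X A : Type*} [Fintype A] [Nonempty A]
    (r : X → A → ℝ) (B : ℝ) (hB : ∀ x a, |r x a| ≤ B)
    (f : X → A → ℝ)
    (hf : ∀ x a, f x a = (1 / (Fintype.card A : ℝ)) *
      ∑ a' : A, ∫ s in Set.Iic (r x a - r x a'),
        (1 / Real.sqrt (2 * Real.pi)) * Real.exp (-s ^ 2 / 2)) :
    ∀ x a, ((1 / Real.sqrt (2 * Real.pi)) * Real.exp (-(2 * B ^ 2))) *
        (Finset.univ.sup' Finset.univ_nonempty (r x) - r x a)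
      ≤ Finset.univ.sup' Finset.univ_nonempty (f x) - f x a := by
  intro x a
  have hfx : f x = bordaScore
      (fun t => ∫ s in Set.Iic t, (1 / Real.sqrt (2 * Real.pi)) * Real.exp (-s ^ 2 / 2)) (r x) :=
    funext (hf x)
  rw [hfx]
  refine mul_sup'_sub_le_bordaScore_sup'_sub _ _ (fun u v hu hv hvu => ?_) (hB x) a
  refine mul_sub_le_integral_Iic_sub_integral_Iic integrable_stdGaussian_density hvu
    fun s hs => ?_
  have hs' : |s| ≤ 2 * B := abs_le.mpr
    ⟨(abs_le.mp hv).1.trans hs.1.le, hs.2.trans (abs_le.mp hu).2⟩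
  convert stdGaussian_density_ge_of_abs_le hs' using 4
  ring
end

section
/- Let X and A be nonempty finite sets, T ≥ 1, and g : X × A → ℝ. For each t ∈ {1, …, T} let L_t, U_t : X × A → ℝ satisfy L_t(x, a) ≤ g(x, a) ≤ U_t(x, a) for all x ∈ X, a ∈ A. Define the pessimistic policy π̂ : X → A by π̂(x) ∈ argmax_{a ∈ A} max_{t ∈ {1,…,T}} L_t(x, a). Then for every x ∈ X, max_{a ∈ A} g(x, a) − g(x, π̂(x)) ≤ min_{t ∈ {1,…,T}} (max_{a ∈ A} U_t(x, a) − max_{a ∈ A} L_t(x, a)). -/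
/-- If for each round `t ∈ {1,…,T}` the confidence bounds `L_t ≤ g ≤ U_t` hold
pointwise, then the pessimistic policy `π̂(x) ∈ argmax_a max_t L_t(x,a)` satisfies, for every
context `x`, `max_a g(x,a) - g(x, π̂(x)) ≤ min_t (max_a U_t(x,a) - max_a L_t(x,a))`. -/
theorem pessimistic_policy_suboptimality
    {X A : Type*} [Fintype X] [Nonempty X] [Fintype A] [Nonempty A]
    (T : ℕ) (hT : 1 ≤ T) (g : X → A → ℝ) (L U : ℕ → X → A → ℝ)
    (hsand : ∀ t ∈ Finset.Icc 1 T, ∀ x a, L t x a ≤ g x a ∧ g x a ≤ U t x a)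
    (π : X → A)
    (hπ : ∀ x a, (Finset.Icc 1 T).sup' ⟨1, Finset.mem_Icc.mpr ⟨le_rfl, hT⟩⟩
        (fun t => L t x a)
      ≤ (Finset.Icc 1 T).sup' ⟨1, Finset.mem_Icc.mpr ⟨le_rfl, hT⟩⟩
        (fun t => L t x (π x))) :
    ∀ x, Finset.univ.sup' Finset.univ_nonempty (g x) - g x (π x)
      ≤ (Finset.Icc 1 T).inf' ⟨1, Finset.mem_Icc.mpr ⟨le_rfl, hT⟩⟩
        (fun t => Finset.univ.sup' Finset.univ_nonempty (U t x)
          - Finset.univ.sup' Finset.univ_nonempty (L t x)) := by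
  intro x
  apply Finset.le_inf'
  intro t ht
  have hL : Finset.univ.sup' Finset.univ_nonempty (L t x) ≤ g x (π x) := by
    apply Finset.sup'_le
    intro a _
    calc L t x a ≤ (Finset.Icc 1 T).sup' ⟨1, Finset.mem_Icc.mpr ⟨le_rfl, hT⟩⟩
          (fun s => L s x a) := Finset.le_sup' (fun s => L s x a) ht
      _ ≤ (Finset.Icc 1 T).sup' ⟨1, Finset.mem_Icc.mpr ⟨le_rfl, hT⟩⟩
          (fun s => L s x (π x)) := hπ x a
      _ ≤ g x (π x) := by
          apply Finset.sup'_le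
          intro s hs
          exact (hsand s hs x (π x)).1
  have hU : Finset.univ.sup' Finset.univ_nonempty (g x)
      ≤ Finset.univ.sup' Finset.univ_nonempty (U t x) := by
    apply Finset.sup'_le
    intro a _
    exact le_trans (hsand t ht x a).2 (Finset.le_sup' _ (Finset.mem_univ a))
  linarith
end

section
/- (Deterministic core of Theorem 1.) Let X and A be nonempty finite sets, T ≥ 1, r, f_r : X × A → ℝ, and L₁ > 0 with (1/L₁)(r*(x) − r(x, a)) ≤ f_r*(x) − f_r(x, a) for all x, a, where r*(x) = max_a r(x, a) and f_r*(x) = max_a f_r(x, a). For each t ∈ {1, …, T}, let μ_t : X × A → ℝ, σ_t : X × A → ℝ with σ_t ≥ 0 pointwise, and let 0 ≤ β₁ ≤ … ≤ β_T satisfy |μ_t(x, a) − f_r(x, a)| ≤ β_t σ_t(x, a) for all t, x, a. Define U_t = μ_t + β_t σ_t and L_t = μ_t − β_t σ_t; let x_t ∈ argmax_{x ∈ X} (max_{a} U_t(x, a) − max_{a} L_t(x, a)), a_t ∈ argmax_{a} U_t(x_t, a), and let the output policy be π̂(x) ∈ argmax_{a ∈ A} max_{t ∈ {1,…,T}} L_t(x,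 a). Then SubOpt(π̂) = max_{x ∈ X} (r*(x) − r(x, π̂(x))) ≤ (2 L₁ β_T/√T) · √(∑_{t=1}^T σ_t(x_t, a_t)²). -/
/-!
In every round `t`, since `L_t ≤ f_r ≤ U_t` and `π̂` maximizes `max_s L_s`, the Borda gap
`f_r*(x) - f_r(x, π̂ x)` is at most `max_a U_t(x, ·) - max_a L_t(x, ·)`, which the choice of
`x_t, a_t` bounds by the width `2 β_t σ_t(x_t, a_t) ≤ 2 β_T σ_t(x_t, a_t)`. A quantity below every
term of a family is below its mean, hence below its root mean square; Assumption 2 turns the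
Borda gap into the reward gap at the cost of the factor `L₁`.
-/

open Finset

theorem Finset.le_mul_sqrt_sum_sq_div_sqrt_card {ι : Type*} {s : Finset ι} (hs : s.Nonempty)
    {c : ι → ℝ} {d k : ℝ} (hk : 0 ≤ k) (h : ∀ i ∈ s, d ≤ k * c i) :
    d ≤ k * √(∑ i ∈ s, c i ^ 2) / √(#s) := by
  have hn : 0 < √(#s : ℝ) := Real.sqrt_pos.2 (by exact_mod_cast hs.card_pos)
  have hsum : ∑ i ∈ s, c i ≤ √(#s : ℝ) * √(∑ i ∈ s, c i ^ 2) := by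
    rw [← Real.sqrt_mul (Nat.cast_nonneg _)]
    exact (le_abs_self _).trans <| Real.abs_le_sqrt sq_sum_le_card_mul_sum_sq
  have hmean : #s * d ≤ k * ∑ i ∈ s, c i := by
    rw [mul_sum, ← nsmul_eq_mul, ← sum_const]
    exact sum_le_sum h
  rw [le_div_iff₀ hn, ← mul_le_mul_iff_right₀ hn]
  calc √(#s : ℝ) * (d * √(#s : ℝ)) = #s * d := by
        rw [mul_left_comm, Real.mul_self_sqrt (Nat.cast_nonneg _), mul_comm]
    _ ≤ k * (√(#s : ℝ) * √(∑ i ∈ s, c i ^ 2)) := hmean.trans (mul_le_mul_of_nonneg_left hsum hk)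
    _ = √(#s : ℝ) * (k * √(∑ i ∈ s, c i ^ 2)) := by ring

theorem max_sub_le_of_confidence_selection {X A : Type*} [Fintype A] [Nonempty A]
    {f U L : X → A → ℝ} {x : X} {a₀ : A} (hfU : ∀ a, f x a ≤ U x a) (hLf : ∀ a, L x a ≤ f x a₀)
    {xₜ : X} {aₜ : A}
    (hxₜ : univ.sup' univ_nonempty (U x) - univ.sup' univ_nonempty (L x)
      ≤ univ.sup' univ_nonempty (U xₜ) - univ.sup' univ_nonempty (L xₜ))
    (haₜ : ∀ a, U xₜ a ≤ U xₜ aₜ) :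
    univ.sup' univ_nonempty (f x) - f x a₀ ≤ U xₜ aₜ - L xₜ aₜ := by
  have hf : univ.sup' univ_nonempty (f x) ≤ univ.sup' univ_nonempty (U x) :=
    sup'_le _ _ fun a _ => (hfU a).trans (le_sup' (U x) (mem_univ a))
  have hLa₀ : univ.sup' univ_nonempty (L x) ≤ f x a₀ := sup'_le _ _ fun a _ => hLf a
  have hU : univ.sup' univ_nonempty (U xₜ) ≤ U xₜ aₜ := sup'_le _ _ fun a _ => haₜ a
  have hL : L xₜ aₜ ≤ univ.sup' univ_nonempty (L xₜ) := le_sup' (L xₜ) (mem_univ aₜ)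
  linarith

/-- deterministic core of Theorem 1: Under Assumption 2, valid confidence
bounds `|μ_t - f_r| ≤ β_t σ_t` with nonnegative `σ_t` and nonnegative nondecreasing `β_t`,
the AE-Borda context/action selection rule and pessimistic output policy `π̂` satisfy
`SubOpt(π̂) ≤ (2 L₁ β_T / √T) √(∑_t σ_t(x_t, a_t)²)`. -/
theorem ae_borda_suboptimality_bound
    {X A : Type*} [Fintype X] [Nonempty X] [Fintype A] [Nonempty A]
    (T : ℕ) (hT : 1 ≤ T) (r f : X → A → ℝ) (L₁ : ℝ) (hL : 0 < L₁)
    (hass : ∀ x a, (1 / L₁) * (Finset.univ.sup' Finset.univ_nonempty (r x) - r x a)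
      ≤ Finset.univ.sup' Finset.univ_nonempty (f x) - f x a)
    (μ σ : ℕ → X → A → ℝ) (β : ℕ → ℝ)
    (hσ : ∀ t ∈ Finset.Icc 1 T, ∀ x a, 0 ≤ σ t x a)
    (hβ0 : ∀ t ∈ Finset.Icc 1 T, 0 ≤ β t)
    (hβmono : ∀ t₁ t₂, 1 ≤ t₁ → t₁ ≤ t₂ → t₂ ≤ T → β t₁ ≤ β t₂)
    (hconf : ∀ t ∈ Finset.Icc 1 T, ∀ x a, |μ t x a - f x a| ≤ β t * σ t x a)
    (xt : ℕ → X) (att : ℕ → A)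
    -- context selection: `x_t` maximizes the gap between optimistic and pessimistic values
    (hxt : ∀ t ∈ Finset.Icc 1 T, ∀ x,
      Finset.univ.sup' Finset.univ_nonempty (fun a => μ t x a + β t * σ t x a)
        - Finset.univ.sup' Finset.univ_nonempty (fun a => μ t x a - β t * σ t x a)
      ≤ Finset.univ.sup' Finset.univ_nonempty (fun a => μ t (xt t) a + β t * σ t (xt t) a)
        - Finset.univ.sup' Finset.univ_nonempty (fun a => μ t (xt t) a - β t * σ t (xt t) a))
    -- action selection: `a_t` maximizes the upper confidence bound at `x_t`
    (hat : ∀ t ∈ Finset.Icc 1 T, ∀ a,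
      μ t (xt t) a + β t * σ t (xt t) a ≤ μ t (xt t) (att t) + β t * σ t (xt t) (att t))
    (π : X → A)
    -- output policy: `π̂(x)` maximizes `a ↦ max_t L_t(x, a)`
    (hπ : ∀ x a, (Finset.Icc 1 T).sup' ⟨1, Finset.mem_Icc.mpr ⟨le_rfl, hT⟩⟩
        (fun t => μ t x a - β t * σ t x a)
      ≤ (Finset.Icc 1 T).sup' ⟨1, Finset.mem_Icc.mpr ⟨le_rfl, hT⟩⟩
        (fun t => μ t x (π x) - β t * σ t x (π x))) :
    Finset.univ.sup' Finset.univ_nonempty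
        (fun x => Finset.univ.sup' Finset.univ_nonempty (r x) - r x (π x))
      ≤ (2 * L₁ * β T / Real.sqrt T) *
        Real.sqrt (∑ t ∈ Finset.Icc 1 T, σ t (xt t) (att t) ^ 2) := by
  have hTmem : T ∈ Icc 1 T := mem_Icc.2 ⟨hT, le_rfl⟩
  have hround : ∀ x, ∀ t ∈ Icc 1 T,
      univ.sup' univ_nonempty (f x) - f x (π x) ≤ 2 * β T * σ t (xt t) (att t) := by
    intro x t ht
    have hLπ : ∀ a, μ t x a - β t * σ t x a ≤ f x (π x) := fun a =>
      (le_sup' (fun s => μ s x a - β s * σ s x a) ht).trans <| (hπ x a).trans <|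
        sup'_le _ _ fun s hs => by linarith [(abs_le.1 (hconf s hs x (π x))).2]
    calc univ.sup' univ_nonempty (f x) - f x (π x)
        ≤ (μ t (xt t) (att t) + β t * σ t (xt t) (att t))
          - (μ t (xt t) (att t) - β t * σ t (xt t) (att t)) :=
          max_sub_le_of_confidence_selection (f := f) (U := fun x a => μ t x a + β t * σ t x a)
            (L := fun x a => μ t x a - β t * σ t x a)
            (fun a => by linarith [(abs_le.1 (hconf t ht x a)).1]) hLπ (hxt t ht x) (hat t ht)
      _ = 2 * (β t * σ t (xt t) (att t)) := by ring
      _ ≤ 2 * (β T * σ t (xt t) (att t)) := by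
          obtain ⟨ht1, htT⟩ := mem_Icc.1 ht
          gcongr
          exacts [hσ t ht _ _, hβmono t T ht1 htT le_rfl]
      _ = 2 * β T * σ t (xt t) (att t) := by ring
  refine sup'_le _ _ fun x _ => ?_
  have hborda := le_mul_sqrt_sum_sq_div_sqrt_card ⟨T, hTmem⟩
    (mul_nonneg zero_le_two (hβ0 T hTmem)) (hround x)
  rw [Nat.card_Icc, Nat.add_sub_cancel] at hborda
  have hreward := hass x (π x)
  rw [one_div, inv_mul_le_iff₀ hL] at hreward
  calc univ.sup' univ_nonempty (r x) - r x (π x)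
      ≤ L₁ * (univ.sup' univ_nonempty (f x) - f x (π x)) := hreward
    _ ≤ L₁ * (2 * β T * √(∑ t ∈ Icc 1 T, σ t (xt t) (att t) ^ 2) / √T) := by gcongr
    _ = _ := by ring
end

section
/- Let D be a type and k : D × D → ℝ a symmetric function such that every finite kernel matrix formed from k is positive semidefinite and k(z, z) ≤ 1 for all z ∈ D. Let η > 0 and let q₁, …, q_n ∈ D. For 1 ≤ t ≤ n, define the posterior variance σ²_{t−1}(q_t) = k(q_t, q_t) − k_{t−1}(q_t)ᵀ (K_{t−1} + η² I)⁻¹ k_{t−1}(q_t), where K_{t−1} = [k(q_i, q_j)]_{1 ≤ i, j ≤ t−1} and k_{t−1}(z) = (k(z, q_i))_{1 ≤ i ≤ t−1} (with σ²₀(q₁) = k(q₁, q₁)). Then ∑_{t=1}^n σ²_{t−1}(q_t) ≤ (2/log(1 + η⁻²)) · (1/2) log det(I_n + η⁻² K_n), where K_n = [k(q_i, q_j)]_{1 ≤ i, j ≤ n}. -/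
/-!
Write `A_t = K_t + η² I` for the regularized kernel matrix of the first `t` queries. The posterior
variance `σ²_t` at the next query, plus `η²`, is the Schur complement of `A_t` in `A_{t+1}`, so
`det (I + η⁻² K_n) = ∏ (1 + η⁻² σ²_t)`. Each `σ²_t` lies in `[0, 1]`: it is also the Schur
complement of the positive semidefinite matrix `K_{t+1} + diag(η², …, η², 0)`, and it is at most
the prior variance `k(q_t, q_t) ≤ 1`. Concavity of `log` gives `s log(1 + c) ≤ log(1 + c s)` for
`s ∈ [0, 1]`, and summing over `t` gives the bound.
-/

open Matrix Finset

namespace Matrix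

variable {m : ℕ} {R : Type*} [CommRing R]

theorem submatrix_finSumFinEquiv_eq_fromBlocks {α : Type*}
    (M : Matrix (Fin (m + 1)) (Fin (m + 1)) α) :
    M.submatrix finSumFinEquiv finSumFinEquiv =
      fromBlocks (M.submatrix Fin.castSucc Fin.castSucc)
        (replicateCol (Fin 1) fun i => M i.castSucc (Fin.last m))
        (replicateRow (Fin 1) fun j => M (Fin.last m) j.castSucc)
        (of fun _ _ => M (Fin.last m) (Fin.last m)) := by
  ext (i | i) (j | j) <;> simp [Fin.fin_one_eq_zero] <;> rfl

noncomputable def lastSchurComplement (M : Matrix (Fin (m + 1)) (Fin (m + 1)) R) : R :=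
  M (Fin.last m) (Fin.last m) -
    (fun j => M (Fin.last m) j.castSucc) ⬝ᵥ
      ((M.submatrix Fin.castSucc Fin.castSucc)⁻¹ *ᵥ fun i => M i.castSucc (Fin.last m))

theorem lastSchurComplement_eq_apply_zero (M : Matrix (Fin (m + 1)) (Fin (m + 1)) R) :
    M.lastSchurComplement =
      (of (fun _ _ => M (Fin.last m) (Fin.last m)) -
        (replicateRow (Fin 1) fun j : Fin m => M (Fin.last m) j.castSucc) *
          (M.submatrix Fin.castSucc Fin.castSucc)⁻¹ *
            replicateCol (Fin 1) fun i : Fin m => M i.castSucc (Fin.last m) :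
        Matrix (Fin 1) (Fin 1) R) 0 0 := by
  rw [sub_apply, ← replicateRow_vecMul, replicateRow_mul_replicateCol_apply,
    ← dotProduct_mulVec]
  rfl

theorem det_eq_det_submatrix_castSucc_mul_lastSchurComplement
    (M : Matrix (Fin (m + 1)) (Fin (m + 1)) R)
    (hA : IsUnit (M.submatrix Fin.castSucc Fin.castSucc).det) :
    M.det = (M.submatrix Fin.castSucc Fin.castSucc).det * M.lastSchurComplement := by
  have := invertibleOfIsUnitDet _ hA
  rw [← det_submatrix_equiv_self finSumFinEquiv, submatrix_finSumFinEquiv_eq_fromBlocks,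
    det_fromBlocks₁₁, det_fin_one, invOf_eq_nonsing_inv, lastSchurComplement_eq_apply_zero]

theorem PosSemidef.lastSchurComplement_nonneg {K : Type*} [Field K] [PartialOrder K]
    [StarRing K] [StarOrderedRing K] {M : Matrix (Fin (m + 1)) (Fin (m + 1)) K}
    (hM : M.PosSemidef) (hA : (M.submatrix Fin.castSucc Fin.castSucc).PosDef) :
    0 ≤ M.lastSchurComplement := by
  have := hA.isUnit.invertible
  have hrow : (replicateCol (Fin 1) fun i : Fin m => M i.castSucc (Fin.last m))ᴴ =
      replicateRow (Fin 1) fun j : Fin m => M (Fin.last m) j.castSucc := by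
    rw [conjTranspose_replicateCol]
    congr 1
    exact funext fun j => hM.isHermitian.apply (Fin.last m) j.castSucc
  have h := (posSemidef_submatrix_equiv finSumFinEquiv).mpr hM
  rw [submatrix_finSumFinEquiv_eq_fromBlocks, ← hrow, PosDef.fromBlocks₁₁ _ _ hA, hrow] at h
  exact lastSchurComplement_eq_apply_zero M ▸ h.diag_nonneg

theorem PosSemidef.posDef_add_smul_one {n : Type*} [Fintype n] [DecidableEq n]
    {A : Matrix n n ℝ} (hA : A.PosSemidef) {r : ℝ} (hr : 0 < r) : (A + r • 1).PosDef :=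
  PosDef.posSemidef_add hA (PosDef.one.smul hr)

end Matrix

theorem Real.mul_log_one_add_le_log_one_add_mul {c s : ℝ} (hc : -1 < c) (hs₀ : 0 ≤ s)
    (hs₁ : s ≤ 1) : s * Real.log (1 + c) ≤ Real.log (1 + c * s) := by
  have h := strictConcaveOn_log_Ioi.concaveOn.2 (Set.mem_Ioi.2 one_pos)
    (Set.mem_Ioi.2 (by linarith : (0 : ℝ) < 1 + c)) (sub_nonneg.2 hs₁) hs₀ (sub_add_cancel 1 s)
  simp only [smul_eq_mul, Real.log_one, mul_zero, zero_add] at h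
  rwa [show (1 - s) * 1 + s * (1 + c) = 1 + c * s by ring] at h

section Kernel

variable {D : Type*} (k : D → D → ℝ) (q : ℕ → D)

def kernelMatrix (m : ℕ) : Matrix (Fin m) (Fin m) ℝ :=
  of fun i j => k (q i) (q j)

noncomputable def posteriorVariance (r : ℝ) (t : ℕ) : ℝ :=
  k (q t) (q t) -
    (fun i : Fin t => k (q t) (q i)) ⬝ᵥ
      ((kernelMatrix k q t + r • 1)⁻¹ *ᵥ fun i : Fin t => k (q t) (q i))

@[simp]
theorem kernelMatrix_apply {m : ℕ} (i j : Fin m) : kernelMatrix k q m i j = k (q i) (q j) := rfl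

@[simp]
theorem submatrix_castSucc_kernelMatrix (m : ℕ) :
    (kernelMatrix k q (m + 1)).submatrix Fin.castSucc Fin.castSucc = kernelMatrix k q m := rfl

theorem submatrix_castSucc_kernelMatrix_add_smul_one (r : ℝ) (m : ℕ) :
    (kernelMatrix k q (m + 1) + r • 1).submatrix Fin.castSucc Fin.castSucc =
      kernelMatrix k q m + r • 1 := by
  simp [submatrix_add, submatrix_smul, submatrix_one _ (Fin.castSucc_injective m)]

variable {k q}

theorem posteriorVariance_add_eq_lastSchurComplement
    {m : ℕ} (hK : (kernelMatrix k q (m + 1)).IsHermitian) (r : ℝ) :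
    posteriorVariance k q r m + r = (kernelMatrix k q (m + 1) + r • 1).lastSchurComplement := by
  have hsymm (i : Fin m) : k (q i) (q m) = k (q m) (q i) := hK.apply (Fin.last m) i.castSucc
  simp [posteriorVariance, lastSchurComplement, submatrix_castSucc_kernelMatrix_add_smul_one,
    Fin.castSucc_ne_last, (Fin.castSucc_ne_last _).symm, hsymm]
  ring

theorem posteriorVariance_eq_lastSchurComplement
    {m : ℕ} (hK : (kernelMatrix k q (m + 1)).IsHermitian) (r : ℝ) :
    posteriorVariance k q r m =
      (kernelMatrix k q (m + 1) + diagonal (Fin.snoc (fun _ => r) 0)).lastSchurComplement := by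
  have hsymm (i : Fin m) : k (q i) (q m) = k (q m) (q i) := hK.apply (Fin.last m) i.castSucc
  simp [posteriorVariance, lastSchurComplement, submatrix_add, smul_one_eq_diagonal,
    submatrix_diagonal _ _ (Fin.castSucc_injective m), Fin.castSucc_ne_last,
    (Fin.castSucc_ne_last _).symm, hsymm]

theorem det_kernelMatrix_add_smul_one (hK : ∀ m, (kernelMatrix k q m).PosSemidef) {r : ℝ}
    (hr : 0 < r) (n : ℕ) :
    (kernelMatrix k q n + r • 1).det = ∏ t ∈ range n, (posteriorVariance k q r t + r) := by
  induction n with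
  | zero => simp
  | succ m ih =>
    have hA := ((hK m).posDef_add_smul_one hr).det_pos.ne'
    rw [← submatrix_castSucc_kernelMatrix_add_smul_one] at hA
    rw [det_eq_det_submatrix_castSucc_mul_lastSchurComplement _ hA.isUnit,
      ← posteriorVariance_add_eq_lastSchurComplement (hK (m + 1)).isHermitian, prod_range_succ,
      submatrix_castSucc_kernelMatrix_add_smul_one, ih]

theorem posteriorVariance_nonneg {t : ℕ} (hK : (kernelMatrix k q (t + 1)).PosSemidef) {r : ℝ}
    (hr : 0 < r) : 0 ≤ posteriorVariance k q r t := by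
  rw [posteriorVariance_eq_lastSchurComplement hK.isHermitian]
  refine PosSemidef.lastSchurComplement_nonneg (hK.add (.diagonal ?_)) ?_
  · exact fun i => Fin.lastCases (by simp) (fun _ => by simpa using hr.le) i
  · simpa [submatrix_add, smul_one_eq_diagonal, submatrix_diagonal _ _ (Fin.castSucc_injective t)]
      using (hK.submatrix Fin.castSucc).posDef_add_smul_one hr

theorem posteriorVariance_le_kernel {t : ℕ} (hK : (kernelMatrix k q t).PosSemidef) {r : ℝ}
    (hr : 0 < r) : posteriorVariance k q r t ≤ k (q t) (q t) := by
  have := (hK.posDef_add_smul_one hr).inv.posSemidef.dotProduct_mulVec_nonneg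
    fun i : Fin t => k (q t) (q i)
  rw [star_trivial] at this
  simp only [posteriorVariance]
  linarith

theorem det_one_add_smul_kernelMatrix (hK : ∀ m, (kernelMatrix k q m).PosSemidef) {r : ℝ}
    (hr : 0 < r) (n : ℕ) :
    (1 + r⁻¹ • kernelMatrix k q n).det =
      ∏ t ∈ range n, (1 + r⁻¹ * posteriorVariance k q r t) := by
  have hscale : 1 + r⁻¹ • kernelMatrix k q n = r⁻¹ • (kernelMatrix k q n + r • 1) := by
    rw [smul_add, smul_smul, inv_mul_cancel₀ hr.ne', one_smul, add_comm]
  have hfactor (t : ℕ) :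
      1 + r⁻¹ * posteriorVariance k q r t = r⁻¹ * (posteriorVariance k q r t + r) := by
    rw [mul_add, inv_mul_cancel₀ hr.ne', add_comm]
  rw [hscale, det_smul, det_kernelMatrix_add_smul_one hK hr, Fintype.card_fin,
    prod_congr rfl fun t _ => hfactor t, prod_mul_distrib, prod_const, card_range]

theorem sum_posteriorVariance_mul_log_le_log_det (hK : ∀ m, (kernelMatrix k q m).PosSemidef)
    (hk : ∀ t, k (q t) (q t) ≤ 1) {r : ℝ} (hr : 0 < r) (n : ℕ) :
    (∑ t ∈ range n, posteriorVariance k q r t) * Real.log (1 + r⁻¹) ≤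
      Real.log (1 + r⁻¹ • kernelMatrix k q n).det := by
  have hσ (t : ℕ) := posteriorVariance_nonneg (hK (t + 1)) hr
  have hpos (t : ℕ) : 0 < 1 + r⁻¹ * posteriorVariance k q r t :=
    add_pos_of_pos_of_nonneg one_pos (mul_nonneg (inv_nonneg.2 hr.le) (hσ t))
  rw [det_one_add_smul_kernelMatrix hK hr, Real.log_prod fun t _ => (hpos t).ne', sum_mul]
  exact sum_le_sum fun t _ => Real.mul_log_one_add_le_log_one_add_mul
    (by linarith [inv_pos.2 hr]) (hσ t) ((posteriorVariance_le_kernel (hK t) hr).trans (hk t))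

end Kernel

theorem sum_posterior_variances_le_information_gain_general
    {D : Type*} (k : D → D → ℝ)
    (hpsd : ∀ (m : ℕ) (z : Fin m → D), (Matrix.of fun i j => k (z i) (z j)).PosSemidef)
    (hbound : ∀ z, k z z ≤ 1)
    (η : ℝ) (hη : 0 < η) (n : ℕ) (q : ℕ → D) :
    ∑ t ∈ Finset.range n,
      (k (q t) (q t) -
        (fun i : Fin t => k (q t) (q i)) ⬝ᵥ
          (((Matrix.of fun i j : Fin t => k (q i) (q j))
              + η ^ 2 • (1 : Matrix (Fin t) (Fin t) ℝ))⁻¹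
            *ᵥ fun i : Fin t => k (q t) (q i)))
      ≤ (2 / Real.log (1 + (η ^ 2)⁻¹)) *
        ((1 / 2) * Real.log
          ((1 + (η ^ 2)⁻¹ • Matrix.of fun i j : Fin n => k (q i) (q j)).det)) := by
  have hr : 0 < η ^ 2 := pow_pos hη 2
  have hlog : 0 < Real.log (1 + (η ^ 2)⁻¹) := Real.log_pos (by linarith [inv_pos.2 hr])
  have key := sum_posteriorVariance_mul_log_le_log_det (fun m => hpsd m fun i => q i)
    (fun t => hbound (q t)) hr n
  show ∑ t ∈ range n, posteriorVariance k q (η ^ 2) t ≤ _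
  refine ((le_div_iff₀ hlog).2 key).trans_eq ?_
  rw [kernelMatrix]
  ring

/-- explicit matrix form of Lemma B.2: For a symmetric PSD kernel `k`
normalized so that `k(z,z) ≤ 1`, noise level `η > 0`, and queries `q₁, …, q_n`
(here `q 0, …, q (n-1)`), the sum of kernel ridge regression posterior variances at the
queried points is bounded by `(2 / log(1 + η⁻²))` times the information gain
`(1/2) log det(I_n + η⁻² K_n)`. -/
theorem sum_posterior_variances_le_information_gain
    {D : Type*} (k : D → D → ℝ) (hsymm : ∀ z w, k z w = k w z)
    (hpsd : ∀ (m : ℕ) (z : Fin m → D), (Matrix.of fun i j => k (z i) (z j)).PosSemidef)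
    (hbound : ∀ z, k z z ≤ 1)
    (η : ℝ) (hη : 0 < η) (n : ℕ) (q : ℕ → D) :
    ∑ t ∈ Finset.range n,
      (k (q t) (q t) -
        (fun i : Fin t => k (q t) (q i)) ⬝ᵥ
          (((Matrix.of fun i j : Fin t => k (q i) (q j))
              + η ^ 2 • (1 : Matrix (Fin t) (Fin t) ℝ))⁻¹
            *ᵥ fun i : Fin t => k (q t) (q i)))
      ≤ (2 / Real.log (1 + (η ^ 2)⁻¹)) *
        ((1 / 2) * Real.log
          ((1 + (η ^ 2)⁻¹ • Matrix.of fun i j : Fin n => k (q i) (q j)).det)) :=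
  sum_posterior_variances_le_information_gain_general k hpsd hbound η hη n q
end
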